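/- Fix an integer k ≥ 2 and an alphabet Σ of k symbols. For every integer i ≥ 2, T(i) − S(i) = Σ_{d | i, d < i} ⌊(i/d − 1)/2⌋ · p̂(d), where T(i) is the number of ordered triples (u,v,z) of words with uv = z and |z| = i, S(i) is the number of such triples counted up to the identification of (u,v,z) with (v,u,z) whenever uv = vu = z, and p̂(d) is the number of aperiodic words of length d. -/

import Mathlib

/-- w^j : j repeated copies of the word w joined together. -/
noncomputable def wpow {α : Type*} (w : List α) (j : ℕ) : List α := (List.replicate j w).flatten

/-- A nonempty word is aperiodic (primitive) if writing it as x^j with j ≥ 1 forces j = 1. -/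
noncomputable def Aperiodic {α : Type*} (w : List α) : Prop :=
  w ≠ [] ∧ ∀ (x : List α) (j : ℕ), 1 ≤ j → w = wpow x j → j = 1

/-- p̂(d): the number of aperiodic words of length d over an alphabet of k symbols. -/
noncomputable def aper (k d : ℕ) : ℕ := Set.ncard {w : List (Fin k) | w.length = d ∧ Aperiodic w}

/-- T(i): the number of ordered triples (u,v,z) of nonempty words with uv = z, |z| = i
(the TUPLE convention). -/
noncomputable def T (k i : ℕ) : ℕ :=
  Set.ncard {t : List (Fin k) × List (Fin k) × List (Fin k) |
    t.1 ≠ [] ∧ t.2.1 ≠ [] ∧ t.1 ++ t.2.1 = t.2.2 ∧ t.2.2.length = i}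

/-- S(i): the number of such triples counted up to identifying (u,v,z) with (v,u,z)
whenever uv = vu = z, i.e. the number of unordered reaction sets {u,v,uv} with
|uv| = i (the SET convention). -/
noncomputable def S (k i : ℕ) : ℕ :=
  Set.ncard {s : Finset (List (Fin k)) | ∃ u v : List (Fin k),
    u ≠ [] ∧ v ≠ [] ∧ (u ++ v).length = i ∧ s = {u, v, u ++ v}}

/-!
Two triples `(u, v, uv)` have the same reaction set `{u, v, uv}` only if they are equal or are
swaps `(u, v, uv)`, `(v, u, vu)` with `uv = vu` and `u ≠ v`, so `T(i) - S(i)` counts the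
commuting triples with `|u| < |v|`. Commuting words are powers `x^a`, `x^b` of a common aperiodic
word `x`, which is unique because words commuting with a common nonempty word commute with each
other. Hence these triples correspond to a proper divisor `d = |x|` of `i`, an aperiodic `x` of
length `d`, and an exponent `1 ≤ a` with `a < i/d - a`, of which there are `⌊(i/d - 1)/2⌋`.
-/

variable {α : Type*}

section Wpow

@[simp] lemma wpow_zero (w : List α) : wpow w 0 = [] := rfl

lemma wpow_succ (w : List α) (j : ℕ) : wpow w (j + 1) = w ++ wpow w j := by
  simp [wpow, List.replicate_succ]

@[simp] lemma wpow_one (w : List α) : wpow w 1 = w := by simp [wpow]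

lemma wpow_add (w : List α) (a b : ℕ) : wpow w (a + b) = wpow w a ++ wpow w b := by
  rw [wpow, List.replicate_add, List.flatten_append]; rfl

lemma wpow_append_wpow_comm (w : List α) (a b : ℕ) :
    wpow w a ++ wpow w b = wpow w b ++ wpow w a := by
  rw [← wpow_add, ← wpow_add, Nat.add_comm]

lemma wpow_mul (w : List α) (a b : ℕ) : wpow w (a * b) = wpow (wpow w a) b := by
  induction b with
  | zero => rfl
  | succ b ih => rw [wpow_succ, ← ih, ← wpow_add, Nat.mul_succ, Nat.add_comm]

@[simp] lemma length_wpow (w : List α) (j : ℕ) : (wpow w j).length = j * w.length := by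
  induction j with
  | zero => simp
  | succ j ih => rw [wpow_succ, List.length_append, ih, Nat.succ_mul, Nat.add_comm]

lemma wpow_eq_nil_iff {w : List α} {j : ℕ} : wpow w j = [] ↔ j = 0 ∨ w = [] := by
  rw [← List.length_eq_zero_iff, length_wpow, Nat.mul_eq_zero, List.length_eq_zero_iff]

end Wpow

section Commute

lemma prefix_of_append_comm {u z : List α} (h : u ++ z = z ++ u) (hl : u.length ≤ z.length) :
    u <+: z :=
  List.prefix_of_prefix_length_le (h ▸ List.prefix_append u z) (List.prefix_append z u) hl

lemma append_comm_of_append_comm_append {p c z : List α} (hp : p ++ z = z ++ p)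
    (hpc : p ++ c ++ z = z ++ (p ++ c)) : c ++ z = z ++ c := by
  apply List.append_cancel_left (as := p)
  calc p ++ (c ++ z) = z ++ (p ++ c) := by rw [← List.append_assoc, hpc]
    _ = p ++ (z ++ c) := by rw [← List.append_assoc, ← hp, List.append_assoc]

lemma append_comm_append {a p c : List α} (hp : a ++ p = p ++ a) (hc : a ++ c = c ++ a) :
    a ++ (p ++ c) = p ++ c ++ a := by
  rw [← List.append_assoc, hp, List.append_assoc, hc, List.append_assoc]

theorem append_comm_of_append_comm_of_ne_nil {z a b : List α} (hz : z ≠ [])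
    (ha : a ++ z = z ++ a) (hb : b ++ z = z ++ b) : a ++ b = b ++ a := by
  induction hn : a.length + b.length using Nat.strong_induction_on generalizing a b with
  | _ n ih =>
  wlog hab : a.length ≤ b.length generalizing a b
  · exact (this hb ha (by omega) (by omega)).symm
  rcases eq_or_ne a [] with rfl | ha_ne
  · simp
  -- Split off a nonempty prefix `p` of `b` commuting with both `a` and `z`: `a` or `z` itself.
  obtain ⟨p, hpa, hpz, hp_ne, c, rfl⟩ :
      ∃ p, a ++ p = p ++ a ∧ p ++ z = z ++ p ∧ p ≠ [] ∧ p <+: b := by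
    rcases le_or_gt b.length z.length with hbz | hzb
    · exact ⟨a, rfl, ha, ha_ne, List.prefix_of_prefix_length_le
        (prefix_of_append_comm ha (hab.trans hbz)) (prefix_of_append_comm hb hbz) hab⟩
    · exact ⟨z, ha, rfl, hz, prefix_of_append_comm hb.symm hzb.le⟩
  have hcz := append_comm_of_append_comm_append hpz hb
  have hp_len := List.length_pos_iff.mpr hp_ne
  simp only [List.length_append] at hn
  exact append_comm_append hpa (ih (a.length + c.length) (by omega) ha hcz rfl)

theorem exists_wpow_of_append_comm {u v : List α} (h : u ++ v = v ++ u) :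
    ∃ x a b, u = wpow x a ∧ v = wpow x b := by
  induction hn : u.length + v.length using Nat.strong_induction_on generalizing u v with
  | _ n ih =>
  wlog huv : u.length ≤ v.length generalizing u v
  · obtain ⟨x, b, a, hv, hu⟩ := this h.symm (by omega) (by omega)
    exact ⟨x, a, b, hu, hv⟩
  rcases eq_or_ne u [] with rfl | hu
  · exact ⟨v, 0, 1, rfl, (wpow_one v).symm⟩
  obtain ⟨c, rfl⟩ := prefix_of_append_comm h huv
  have hcu := append_comm_of_append_comm_append rfl h.symm
  have hu_len := List.length_pos_iff.mpr hu
  simp only [List.length_append] at hn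
  obtain ⟨x, a, b, rfl, rfl⟩ := ih (u.length + c.length) (by omega) hcu.symm rfl
  exact ⟨x, a, a + b, rfl, (wpow_add x a b).symm⟩

theorem exists_aperiodic_wpow {w : List α} (hw : w ≠ []) :
    ∃ x n, Aperiodic x ∧ w = wpow x n := by
  induction hn : w.length using Nat.strong_induction_on generalizing w with
  | _ n ih =>
  by_cases hap : Aperiodic w
  · exact ⟨w, 1, hap, (wpow_one w).symm⟩
  obtain ⟨x, j, hj, rfl, hj1⟩ : ∃ x j, 1 ≤ j ∧ w = wpow x j ∧ j ≠ 1 := by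
    simpa [Aperiodic, hw] using hap
  have hx : x ≠ [] := fun hx => hw (wpow_eq_nil_iff.mpr (Or.inr hx))
  have hx_len := List.length_pos_iff.mpr hx
  rw [length_wpow] at hn
  obtain ⟨y, m, hy, rfl⟩ := ih x.length (by nlinarith [show 2 ≤ j by omega]) hx rfl
  exact ⟨y, m * j, hy, (wpow_mul y m j).symm⟩

theorem exists_aperiodic_wpow_of_append_comm {u v : List α} (hu : u ≠ []) (h : u ++ v = v ++ u) :
    ∃ x a b, Aperiodic x ∧ u = wpow x a ∧ v = wpow x b := by
  obtain ⟨t, a, b, rfl, rfl⟩ := exists_wpow_of_append_comm h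
  have ht : t ≠ [] := fun ht => hu (wpow_eq_nil_iff.mpr (Or.inr ht))
  obtain ⟨x, m, hx, rfl⟩ := exists_aperiodic_wpow ht
  exact ⟨x, m * a, m * b, hx, (wpow_mul x m a).symm, (wpow_mul x m b).symm⟩

lemma Aperiodic.eq_of_eq_wpow {x s : List α} {p : ℕ} (hx : Aperiodic x) (h : x = wpow s p) :
    x = s := by
  have hp : p ≠ 0 := by rintro rfl; exact hx.1 h
  rw [h, hx.2 s p (Nat.one_le_iff_ne_zero.mpr hp) h, wpow_one]

theorem Aperiodic.eq_of_wpow_eq {x y : List α} {a b : ℕ} (hx : Aperiodic x) (hy : Aperiodic y)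
    (ha : a ≠ 0) (h : wpow x a = wpow y b) : x = y ∧ a = b := by
  have hz : wpow x a ≠ [] := by simp [wpow_eq_nil_iff, ha, hx.1]
  have hxz : x ++ wpow x a = wpow x a ++ x := by
    simpa using wpow_append_wpow_comm x 1 a
  have hyz : y ++ wpow x a = wpow x a ++ y := by
    simpa [h] using wpow_append_wpow_comm y 1 b
  obtain ⟨s, p, q, -, hxs, hys⟩ :=
    exists_aperiodic_wpow_of_append_comm hx.1 (append_comm_of_append_comm_of_ne_nil hz hxz hyz)
  have hxy : x = y := (hx.eq_of_eq_wpow hxs).trans (hy.eq_of_eq_wpow hys).symm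
  have hlen := congrArg List.length h
  rw [length_wpow, length_wpow, ← hxy] at hlen
  exact ⟨hxy, Nat.eq_of_mul_eq_mul_right (List.length_pos_iff.mpr hx.1) hlen⟩

theorem eq_or_swap_of_finset_eq [DecidableEq α] {u v u' v' : List α}
    (hu : u ≠ []) (hv : v ≠ []) (hu' : u' ≠ []) (hv' : v' ≠ [])
    (hlen : (u ++ v).length = (u' ++ v').length)
    (h : ({u, v, u ++ v} : Finset (List α)) = {u', v', u' ++ v'}) :
    (u' = u ∧ v' = v) ∨ (u' = v ∧ v' = u ∧ u ++ v = v ++ u) := by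
  have hmem : ∀ w ∈ ({u', v', u' ++ v'} : Finset (List α)),
      w = u ∨ w = v ∨ w = u ++ v := by
    simp [← h]
  simp only [List.length_append] at hlen
  have := List.length_pos_iff.mpr hu; have := List.length_pos_iff.mpr hv
  have := List.length_pos_iff.mpr hu'; have := List.length_pos_iff.mpr hv'
  have huv' : u' ++ v' = u ++ v := by
    rcases hmem (u' ++ v') (by simp) with rfl | rfl | h'
    · simp only [List.length_append] at hlen; omega
    · simp only [List.length_append] at hlen; omega
    · exact h'
  have hshort : ∀ w ∈ ({u', v', u' ++ v'} : Finset (List α)),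
      w.length < u.length + v.length → w = u ∨ w = v := by
    intro w hw hw_len
    rcases hmem w hw with h' | h' | rfl
    · exact .inl h'
    · exact .inr h'
    · simp at hw_len
  have hu'_mem := hshort u' (by simp) (by omega)
  have hv'_mem := hshort v' (by simp) (by omega)
  rcases hu'_mem with rfl | rfl
  · exact .inl ⟨rfl, List.append_cancel_left huv'⟩
  rcases hv'_mem with rfl | rfl
  · exact .inr ⟨rfl, rfl, huv'.symm⟩
  · exact .inl ⟨List.append_cancel_right huv', rfl⟩

end Commute

section Counting

variable (α) in
def concatTriples (i : ℕ) : Set (List α × List α × List α) :=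
  {t | t.1 ≠ [] ∧ t.2.1 ≠ [] ∧ t.1 ++ t.2.1 = t.2.2 ∧ t.2.2.length = i}

variable (α) in
/-- The SET convention identifies these triples with their swaps `(v, u, vu)`, and counts the
swaps. -/
def redundantTriples (i : ℕ) : Set (List α × List α × List α) :=
  {t ∈ concatTriples α i | t.1 ++ t.2.1 = t.2.1 ++ t.1 ∧ t.1.length < t.2.1.length}

lemma redundantTriples_subset (i : ℕ) : redundantTriples α i ⊆ concatTriples α i :=
  Set.sep_subset _ _

lemma concatTriples_finite [Finite α] (i : ℕ) : (concatTriples α i).Finite := by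
  refine ((List.finite_length_le α i).prod
    ((List.finite_length_le α i).prod (List.finite_length_le α i))).subset ?_
  rintro ⟨u, v, z⟩ ⟨-, -, huv, hz⟩
  dsimp only at huv hz
  subst huv
  simp only [List.length_append] at hz
  simp only [Set.mem_prod, Set.mem_ofPred_eq, List.length_append]
  omega

def reactionSet [DecidableEq α] (t : List α × List α × List α) : Finset (List α) :=
  {t.1, t.2.1, t.2.2}

lemma injOn_reactionSet [DecidableEq α] (i : ℕ) :
    Set.InjOn reactionSet (concatTriples α i \ redundantTriples α i) := by
  rintro ⟨u, v, z⟩ ⟨⟨hu, hv, huv, hz⟩, hred⟩ ⟨u', v', z'⟩ ⟨⟨hu', hv', huv', hz'⟩, hred'⟩ h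
  dsimp only at *
  subst huv huv'
  rcases eq_or_swap_of_finset_eq hu hv hu' hv' (hz.trans hz'.symm) h with
    ⟨rfl, rfl⟩ | ⟨hu'v, hv'u, hcomm⟩
  · rfl
  subst u' v'
  have hle : u.length ≤ v.length :=
    not_lt.mp fun hlt => hred' ⟨⟨hv, hu, rfl, hz'⟩, hcomm.symm, hlt⟩
  have hge : v.length ≤ u.length :=
    not_lt.mp fun hlt => hred ⟨⟨hu, hv, rfl, hz⟩, hcomm, hlt⟩
  rw [(List.append_inj hcomm (le_antisymm hle hge)).1]

lemma image_reactionSet [DecidableEq α] (i : ℕ) :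
    reactionSet '' (concatTriples α i \ redundantTriples α i) =
      {s | ∃ u v : List α, u ≠ [] ∧ v ≠ [] ∧ (u ++ v).length = i ∧ s = {u, v, u ++ v}} := by
  ext s
  constructor
  · rintro ⟨⟨u, v, z⟩, ⟨⟨hu, hv, huv, hz⟩, -⟩, rfl⟩
    dsimp only at huv hz
    subst huv
    exact ⟨u, v, hu, hv, hz, rfl⟩
  · rintro ⟨u, v, hu, hv, hz, rfl⟩
    by_cases hred : (u, v, u ++ v) ∈ redundantTriples α i
    · obtain ⟨-, hcomm, hlt⟩ := hred
      refine ⟨(v, u, v ++ u), ⟨⟨hv, hu, rfl, hcomm ▸ hz⟩, fun h => ?_⟩, ?_⟩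
      · exact absurd h.2.2 (not_lt.mpr hlt.le)
      · simp only [reactionSet, ← hcomm, Finset.insert_comm]
    · exact ⟨(u, v, u ++ v), ⟨⟨hu, hv, rfl, hz⟩, hred⟩, rfl⟩

end Counting

section RootParametrization

variable (α) in
/-- `⟨d, x, c⟩` stands for the triple `(x^(c+1), x^(i/d - (c+1)), x^(i/d))`. -/
def RootParams (i : ℕ) : Type _ :=
  Σ d : i.properDivisors, {x : List α | x.length = d ∧ Aperiodic x} × Fin ((i / d - 1) / 2)

noncomputable def RootParams.triple {i : ℕ} (p : RootParams α i) : List α × List α × List α :=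
  (wpow p.2.1 (p.2.2 + 1), wpow p.2.1 (i / p.1 - (p.2.2 + 1)), wpow p.2.1 (i / p.1))

lemma RootParams.triple_injective (i : ℕ) :
    Function.Injective (RootParams.triple : RootParams α i → _) := by
  rintro ⟨⟨d, hd⟩, ⟨x, hx⟩, c⟩ ⟨⟨d', hd'⟩, ⟨x', hx'⟩, c'⟩ h
  obtain ⟨rfl, hc⟩ := hx.2.eq_of_wpow_eq hx'.2 (Nat.succ_ne_zero _) (congrArg Prod.fst h)
  obtain rfl : d = d' := hx.1.symm.trans hx'.1
  obtain rfl : c = c' := Fin.ext (Nat.succ_injective hc)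
  rfl

lemma RootParams.range_triple (i : ℕ) :
    Set.range (RootParams.triple : RootParams α i → _) = redundantTriples α i := by
  ext ⟨u, v, z⟩
  constructor
  · rintro ⟨⟨⟨d, hd⟩, ⟨x, hxd, hx⟩, c, hc⟩, h⟩
    dsimp only at hc
    obtain ⟨hdvd, -⟩ := Nat.mem_properDivisors.mp hd
    have hd_pos := Nat.pos_of_mem_properDivisors hd
    simp only [RootParams.triple, Prod.mk.injEq] at h
    obtain ⟨rfl, rfl, rfl⟩ := h
    refine ⟨⟨?_, ?_, ?_, ?_⟩, wpow_append_wpow_comm _ _ _, ?_⟩ <;> dsimp only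
    · simp [wpow_eq_nil_iff, hx.1]
    · simp [wpow_eq_nil_iff, hx.1]; omega
    · rw [← wpow_add]; congr 1; omega
    · rw [length_wpow, hxd, Nat.div_mul_cancel hdvd]
    · simp only [length_wpow, hxd]
      exact Nat.mul_lt_mul_of_pos_right (by omega) hd_pos
  · rintro ⟨⟨hu, hv, huv, hz⟩, hcomm, hlt⟩
    dsimp only at huv hz hcomm hlt
    subst huv hz
    obtain ⟨x, a, b, hx, rfl, rfl⟩ := exists_aperiodic_wpow_of_append_comm hu hcomm
    have ha : a ≠ 0 := fun ha => hu (by simp [ha])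
    have hx_pos := List.length_pos_iff.mpr hx.1
    simp only [length_wpow] at hlt
    have hab : a < b := Nat.lt_of_mul_lt_mul_right hlt
    have hlen : (wpow x a ++ wpow x b).length = (a + b) * x.length := by simp [Nat.add_mul]
    have hdiv : (wpow x a ++ wpow x b).length / x.length = a + b := by
      rw [hlen, Nat.mul_div_cancel _ hx_pos]
    have hdvd : x.length ∣ (wpow x a ++ wpow x b).length := ⟨a + b, by rw [hlen, Nat.mul_comm]⟩
    refine ⟨⟨⟨x.length, Nat.mem_properDivisors.mpr ⟨hdvd, ?_⟩⟩, ⟨x, rfl, hx⟩, a - 1,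
      by dsimp only; omega⟩, ?_⟩
    · rw [hlen]; exact (Nat.lt_mul_iff_one_lt_left hx_pos).mpr (by omega)
    · simp only [RootParams.triple, hdiv, Prod.mk.injEq]
      refine ⟨congrArg _ (by omega), congrArg _ (by omega), wpow_add x a b⟩

lemma ncard_redundantTriples [Finite α] (i : ℕ) :
    (redundantTriples α i).ncard =
      ∑ d ∈ i.properDivisors,
        ((i / d - 1) / 2) * {x : List α | x.length = d ∧ Aperiodic x}.ncard := by
  have (d : ℕ) : Finite {x : List α | x.length = d ∧ Aperiodic x} :=
    ((List.finite_length_eq α d).subset fun _ hx => hx.1).to_subtype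
  rw [← RootParams.range_triple, ← Nat.card_coe_set_eq,
    Nat.card_range_of_injective (RootParams.triple_injective i), RootParams, Nat.card_sigma,
    ← Finset.sum_coe_sort i.properDivisors]
  refine Finset.sum_congr rfl fun d _ => ?_
  rw [Nat.card_prod, Nat.card_fin, Nat.card_coe_set_eq, Nat.mul_comm]

end RootParametrization

theorem stmt_9_general (k : ℕ) (i : ℕ) :
    T k i - S k i = ∑ d ∈ i.properDivisors, ((i / d - 1) / 2) * aper k d := by
  have hsplit := Set.ncard_sdiff_add_ncard_of_subset (redundantTriples_subset (α := Fin k) i)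
    (concatTriples_finite i)
  have hT : T k i = (concatTriples (Fin k) i).ncard := rfl
  have hS : S k i = (concatTriples (Fin k) i \ redundantTriples (Fin k) i).ncard := by
    rw [S, ← image_reactionSet, (injOn_reactionSet i).ncard_image]
  rw [hT, hS, Nat.sub_eq_of_eq_add' hsplit.symm]
  exact ncard_redundantTriples i

/-- for i ≥ 2, T(i) − S(i) = Σ_{d | i, d < i} ⌊(i/d − 1)/2⌋·p̂(d). -/
theorem stmt_9 (k : ℕ) (hk : 2 ≤ k) (i : ℕ) (hi : 2 ≤ i) :
    T k i - S k i = ∑ d ∈ i.properDivisors, ((i / d - 1) / 2) * aper k d :=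
  stmt_9_general k i
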